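/- arXiv:2507.13129 — 6 statements merged into one kernel-verified Lean document; each statement's English description precedes it below -/
import Mathlib

section
/- For every graph G with at least one edge, the non-adjacency witness number q(G) is sandwiched between the clique number and the maximum degree plus one: ω(G) ≤ q(G) ≤ Δ(G) + 1. -/
/-- A set of vertices `T` has no common neighbor in `G`. -/
def SimpleGraph.NoCommonNbr {V : Type*} (G : SimpleGraph V) (T : Finset V) : Prop :=
  ¬ ∃ v : V, ∀ t ∈ T, G.Adj v t

/-- `q` witnesses the non-adjacency witness property for `G`. -/
def SimpleGraph.HasNAW {V : Type*} (G : SimpleGraph V) (q : ℕ) : Prop :=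
  0 < q ∧ ∀ T : Finset V, G.NoCommonNbr T →
    ∃ T' ⊆ T, T'.card ≤ q ∧ G.NoCommonNbr T'

/-- The non-adjacency witness number `q(G)`: the smallest positive integer `q` such that
every vertex set with no common neighbor contains a subset of size at most `q`
with no common neighbor. -/
noncomputable def SimpleGraph.nawn {V : Type*} (G : SimpleGraph V) : ℕ :=
  sInf {q | G.HasNAW q}

/-!
The lower bound: a maximum clique `s` has no common neighbour (one would enlarge it), while
every proper subset of `s` has one (any vertex of `s` outside it), so the only witness inside
`s` is `s` itself. The upper bound: a common neighbour of `Δ + 1` vertices would have degree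
`> Δ`, so any `Δ + 1` vertices of a large set already witness non-adjacency.
-/

namespace SimpleGraph

variable {V : Type*} (G : SimpleGraph V)

theorem noCommonNbr_of_maxDegree_lt_card [Fintype V] [DecidableRel G.Adj] {T : Finset V}
    (hT : G.maxDegree < T.card) : G.NoCommonNbr T := by
  rintro ⟨v, hv⟩
  have hsub : T ⊆ G.neighborFinset v := fun t ht => (G.mem_neighborFinset v t).mpr (hv t ht)
  have := (Finset.card_le_card hsub).trans_eq (G.card_neighborFinset_eq_degree v)
  exact (this.trans (G.degree_le_maxDegree v)).not_gt hT

theorem hasNAW_maxDegree_succ [Fintype V] [DecidableRel G.Adj] :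
    G.HasNAW (G.maxDegree + 1) := by
  refine ⟨Nat.succ_pos _, fun T hT => ?_⟩
  by_cases hcard : T.card ≤ G.maxDegree + 1
  · exact ⟨T, subset_rfl, hcard, hT⟩
  · obtain ⟨T', hT'T, hT'card⟩ := Finset.exists_subset_card_eq (not_le.mp hcard).le
    exact ⟨T', hT'T, hT'card.le, G.noCommonNbr_of_maxDegree_lt_card (by omega)⟩

theorem hasNAW_nawn [Fintype V] [DecidableRel G.Adj] : G.HasNAW G.nawn :=
  Nat.sInf_mem (s := {q | G.HasNAW q}) ⟨_, G.hasNAW_maxDegree_succ⟩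

variable {G}

theorem IsClique.not_noCommonNbr_of_ssubset {s T : Finset V} (hs : G.IsClique (s : Set V))
    (hTs : T ⊂ s) : ¬ G.NoCommonNbr T := by
  obtain ⟨x, hxs, hxT⟩ := Finset.exists_of_ssubset hTs
  exact not_not.mpr ⟨x, fun t ht => hs hxs (hTs.subset ht) (ne_of_mem_of_not_mem ht hxT).symm⟩

theorem IsClique.card_le_of_hasNAW {s : Finset V} {q : ℕ} (hs : G.IsClique (s : Set V))
    (hsT : G.NoCommonNbr s) (hq : G.HasNAW q) : s.card ≤ q := by
  obtain ⟨T, hTs, hTq, hT⟩ := hq.2 s hsT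
  obtain rfl : T = s := by
    by_contra hne
    exact hs.not_noCommonNbr_of_ssubset (hTs.ssubset_of_ne hne) hT
  exact hTq

theorem IsNClique.noCommonNbr_of_cliqueNum [Fintype V] {s : Finset V}
    (hs : G.IsNClique G.cliqueNum s) : G.NoCommonNbr s := by
  classical
  rintro ⟨v, hv⟩
  have hvs : v ∉ s := fun hvs => G.irrefl (hv v hvs)
  have hclique : G.IsClique (insert v s : Finset V) := by
    rw [Finset.coe_insert]
    exact hs.isClique.insert fun t ht _ => hv t ht
  have := hclique.card_le_cliqueNum
  rw [Finset.card_insert_of_notMem hvs, hs.card_eq] at this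
  omega

end SimpleGraph

theorem statement0_general {V : Type*} [Fintype V] (G : SimpleGraph V) [DecidableRel G.Adj] :
    G.cliqueNum ≤ G.nawn ∧ G.nawn ≤ G.maxDegree + 1 := by
  constructor
  · obtain ⟨s, hs⟩ := G.exists_isNClique_cliqueNum
    rw [← hs.card_eq]
    exact hs.isClique.card_le_of_hasNAW hs.noCommonNbr_of_cliqueNum G.hasNAW_nawn
  · exact Nat.sInf_le G.hasNAW_maxDegree_succ

theorem statement0 {V : Type*} [Fintype V] (G : SimpleGraph V) [DecidableRel G.Adj]
    (hE : ∃ u v : V, G.Adj u v) :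
    G.cliqueNum ≤ G.nawn ∧ G.nawn ≤ G.maxDegree + 1 :=
  statement0_general G
end

section
/- For all positive integers m and r with m ≥ 2r, the non-adjacency witness number of the Kneser graph K(m,r) equals m − 2r + 2. -/
/-- The Kneser graph `K(m,r)`: vertices are the `r`-element subsets of `{1,…,m}`,
adjacent iff disjoint. -/
def kneserGraph (m r : ℕ) : SimpleGraph {A : Finset (Fin m) // A.card = r} where
  Adj A B := Disjoint A.1 B.1 ∧ A ≠ B
  symm := ⟨fun _ _ h => ⟨h.1.symm, h.2.symm⟩⟩
  loopless := ⟨fun _ h => h.2 rfl⟩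

/-!
A family `T` of `r`-sets has a common neighbour in `K(m,r)` iff its union misses at least
`r` points, i.e. has at most `m - r` elements. Upper bound: starting from one member and
greedily adding members that cover a new point, `m - 2r + 2` members already cover
`min (|⋃ T|) (m - r + 1)` points. Lower bound: the sunflower with core `{0, …, r - 2}` and
petals `r - 1, …, m - r` covers `m - r + 1` points, but any `q` of its members cover at most
`r - 1 + q`.
-/

open Finset

section Subfamilies

variable {ι α : Type*} [DecidableEq α] (f : ι → Finset α)

theorem card_biUnion_le_card_add_card_mul (T : Finset ι) (C : Finset α) {d : ℕ}
    (hf : ∀ i ∈ T, #(f i \ C) ≤ d) : #(T.biUnion f) ≤ #C + #T * d :=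
  calc #(T.biUnion f)
      ≤ #(C ∪ T.biUnion fun i => f i \ C) := card_le_card fun x hx => by
        by_cases hxC : x ∈ C <;> simp_all
    _ ≤ #C + #(T.biUnion fun i => f i \ C) := card_union_le _ _
    _ ≤ #C + #T * d := by grw [card_biUnion_le_card_mul T _ d hf]

theorem exists_subset_card_le_min_le_card_biUnion [DecidableEq ι] {r : ℕ} {T : Finset ι}
    (hT : T.Nonempty) (hf : ∀ i ∈ T, r ≤ #(f i)) (k : ℕ) :
    ∃ T' ⊆ T, #T' ≤ k + 1 ∧ min #(T.biUnion f) (r + k) ≤ #(T'.biUnion f) := by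
  induction k with
  | zero =>
    obtain ⟨i, hi⟩ := hT
    refine ⟨{i}, singleton_subset_iff.mpr hi, by simp, ?_⟩
    simpa using Or.inr (hf i hi)
  | succ k ih =>
    obtain ⟨T', hT'T, hcard, hcover⟩ := ih
    by_cases hlarge : min #(T.biUnion f) (r + (k + 1)) ≤ #(T'.biUnion f)
    · exact ⟨T', hT'T, by omega, hlarge⟩
    have hssub : T'.biUnion f ⊂ T.biUnion f :=
      (biUnion_subset_biUnion_of_subset_left f hT'T).ssubset_of_ne fun h => by
        rw [h] at hlarge; omega
    obtain ⟨x, hxT, hxT'⟩ := exists_of_ssubset hssub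
    obtain ⟨i, hiT, hxi⟩ := mem_biUnion.mp hxT
    have hgrow : T'.biUnion f ⊂ (insert i T').biUnion f := by
      rw [biUnion_insert]
      exact ssubset_of_subset_of_ne subset_union_right fun h =>
        hxT' (h ▸ mem_union_left _ hxi)
    refine ⟨insert i T', insert_subset hiT hT'T, ?_, ?_⟩
    · grw [card_insert_le]; omega
    · have := card_lt_card hgrow; omega

end Subfamilies

def finPrefix (m k : ℕ) : Finset (Fin m) := {x | (x : ℕ) < k}

@[simp]
theorem mem_finPrefix {m k : ℕ} {x : Fin m} : x ∈ finPrefix m k ↔ (x : ℕ) < k := by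
  simp [finPrefix]

theorem card_finPrefix {m k : ℕ} (h : k ≤ m) : #(finPrefix m k) = k := by
  rw [finPrefix, Fin.card_filter_val_lt, min_eq_right h]

section Kneser

variable {m r : ℕ}

theorem kneserGraph_adj_iff (hr : 0 < r) {A B : {A : Finset (Fin m) // A.card = r}} :
    (kneserGraph m r).Adj A B ↔ Disjoint A.1 B.1 := by
  refine ⟨And.left, fun h => ⟨h, fun hAB => ?_⟩⟩
  rw [hAB, disjoint_self_iff_empty] at h
  have := B.2
  simp [h] at this
  omega

theorem kneserGraph_noCommonNbr_iff (hr : 0 < r) (hrm : r ≤ m)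
    (T : Finset {A : Finset (Fin m) // A.card = r}) :
    (kneserGraph m r).NoCommonNbr T ↔ m - r < #(T.biUnion Subtype.val) := by
  set U := T.biUnion Subtype.val
  have hcommon :
      (∃ v, ∀ t ∈ T, (kneserGraph m r).Adj v t) ↔ ∃ B ⊆ Uᶜ, #B = r := by
    simp only [kneserGraph_adj_iff hr, subset_compl_iff_disjoint_right, U,
      disjoint_biUnion_right]
    exact ⟨fun ⟨v, hv⟩ => ⟨v.1, hv, v.2⟩, fun ⟨B, hB, hBr⟩ => ⟨⟨B, hBr⟩, hB⟩⟩
  have hfits : (∃ B ⊆ Uᶜ, #B = r) ↔ r ≤ #Uᶜ :=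
    ⟨fun ⟨_, hB, hBr⟩ => hBr ▸ card_le_card hB, exists_subset_card_eq⟩
  have hU : #U ≤ m := by simpa using card_le_univ U
  rw [SimpleGraph.NoCommonNbr, hcommon, hfits, card_compl, Fintype.card_fin]
  omega

theorem kneserGraph_hasNAW (hr : 0 < r) (hm : 2 * r ≤ m) :
    (kneserGraph m r).HasNAW (m - 2 * r + 2) := by
  refine ⟨by omega, fun T hT => ?_⟩
  rw [kneserGraph_noCommonNbr_iff hr (by omega)] at hT
  have hTne : T.Nonempty := nonempty_iff_ne_empty.mpr fun h => by simp [h] at hT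
  obtain ⟨T', hT'T, hcard, hcover⟩ :=
    exists_subset_card_le_min_le_card_biUnion Subtype.val hTne (fun A _ => A.2.ge)
      (m - 2 * r + 1)
  exact ⟨T', hT'T, hcard, (kneserGraph_noCommonNbr_iff hr (by omega) T').mpr (by omega)⟩

def kneserSunflower (m r : ℕ) : Finset {A : Finset (Fin m) // A.card = r} :=
  {A | finPrefix m (r - 1) ⊆ A.1 ∧ A.1 ⊆ finPrefix m (m - r + 1)}

theorem kneserSunflower_noCommonNbr (hr : 0 < r) (hm : 2 * r ≤ m) :
    (kneserGraph m r).NoCommonNbr (kneserSunflower m r) := by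
  rw [kneserGraph_noCommonNbr_iff hr (by omega)]
  suffices h : finPrefix m (m - r + 1) ⊆ (kneserSunflower m r).biUnion Subtype.val by
    have := card_le_card h
    rw [card_finPrefix (by omega)] at this
    omega
  intro x hx
  rw [mem_finPrefix] at hx
  set j : Fin m := ⟨max x (r - 1), by omega⟩
  have hcard : #(insert j (finPrefix m (r - 1))) = r := by
    rw [card_insert_of_notMem (by simp [j]), card_finPrefix (by omega)]
    omega
  refine mem_biUnion.mpr ⟨⟨_, hcard⟩, ?_, ?_⟩
  · simp only [kneserSunflower, mem_filter, mem_univ, true_and]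
    refine ⟨subset_insert _ _, insert_subset (by simp [j]; omega) fun y hy => ?_⟩
    simp only [mem_finPrefix] at hy ⊢
    omega
  · by_cases hxr : (x : ℕ) < r - 1
    · exact mem_insert_of_mem (mem_finPrefix.mpr hxr)
    · exact mem_insert.mpr (Or.inl (Fin.ext (by simp [j]; omega)))

theorem le_of_kneserGraph_hasNAW (hr : 0 < r) (hm : 2 * r ≤ m) {q : ℕ}
    (hq : (kneserGraph m r).HasNAW q) : m - 2 * r + 2 ≤ q := by
  by_contra! hlt
  obtain ⟨T', hT', hcard, hT'common⟩ := hq.2 _ (kneserSunflower_noCommonNbr hr hm)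
  rw [kneserGraph_noCommonNbr_iff hr (by omega)] at hT'common
  have hpetal : ∀ A ∈ T', #(A.1 \ finPrefix m (r - 1)) ≤ 1 := fun A hA => by
    have hcore : finPrefix m (r - 1) ⊆ A.1 := by
      have := hT' hA
      simp only [kneserSunflower, mem_filter] at this
      exact this.2.1
    rw [card_sdiff_of_subset hcore, card_finPrefix (by omega), A.2]
    omega
  have := card_biUnion_le_card_add_card_mul Subtype.val T' _ hpetal
  rw [card_finPrefix (by omega)] at this
  omega

end Kneser

theorem statement3 (m r : ℕ) (hr : 0 < r) (hm : 2 * r ≤ m) :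
    (kneserGraph m r).nawn = m - 2 * r + 2 :=
  IsLeast.csInf_eq ⟨kneserGraph_hasNAW hr hm, fun _ => le_of_kneserGraph_hasNAW hr hm⟩
end

section
/- For a positive integer d, every d-degenerate graph G satisfies q(G) ≤ d + 1, where q(G) is the non-adjacency witness number. -/
/-!
Take a minimal subset `T'` of `T` with no common neighbour. Minimality gives, for each `t ∈ T'`,
a vertex `u t` adjacent to every vertex of `T'` except `t`; these vertices are distinct. In the
subgraph induced on `T' ∪ u(T')` every vertex then has at least `|T'| - 1` neighbours, so
`d`-degeneracy forces `|T'| ≤ d + 1`.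
-/

namespace SimpleGraph

variable {V : Type*} {G : SimpleGraph V}

theorem NoCommonNbr.exists_minimal_subset [DecidableEq V] {T : Finset V} (hT : G.NoCommonNbr T) :
    ∃ T' ⊆ T, G.NoCommonNbr T' ∧ ∀ t ∈ T', ¬ G.NoCommonNbr (T'.erase t) := by
  induction T using Finset.strongInduction with
  | H T ih =>
    by_cases hmin : ∃ t ∈ T, G.NoCommonNbr (T.erase t)
    · obtain ⟨t, ht, hTt⟩ := hmin
      obtain ⟨T', hsub, hT'⟩ := ih _ (Finset.erase_ssubset ht) hTt
      exact ⟨T', hsub.trans (Finset.erase_subset _ _), hT'⟩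
    · push Not at hmin
      exact ⟨T, subset_rfl, hT, hmin⟩

theorem NoCommonNbr.exists_adj_iff_ne [DecidableEq V] {T : Finset V} (hT : G.NoCommonNbr T)
    (hmin : ∀ t ∈ T, ¬ G.NoCommonNbr (T.erase t)) :
    ∃ u : V → V, ∀ t ∈ T, ∀ s ∈ T, G.Adj (u t) s ↔ s ≠ t := by
  have hex : ∀ t ∈ T, ∃ u, ∀ s ∈ T.erase t, G.Adj u s := fun t ht => not_not.mp (hmin t ht)
  choose! u hu using hex
  refine ⟨u, fun t ht s hs =>
    ⟨fun hadj hst => ?_, fun hst => hu t ht s (Finset.mem_erase.2 ⟨hst, hs⟩)⟩⟩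
  subst hst
  refine hT ⟨u s, fun r hr => ?_⟩
  by_cases hrs : r = s
  · exact hrs ▸ hadj
  · exact hu s ht r (Finset.mem_erase.2 ⟨hrs, hr⟩)

theorem card_le_succ_of_adj_iff_ne [DecidableRel G.Adj] [DecidableEq V] {d : ℕ}
    (hdeg : ∀ W : Finset V, W.Nonempty → ∃ v ∈ W, (W.filter (fun w => G.Adj v w)).card ≤ d)
    {T : Finset V} {u : V → V} (hu : ∀ t ∈ T, ∀ s ∈ T, G.Adj (u t) s ↔ s ≠ t) :
    T.card ≤ d + 1 := by
  by_contra! hcard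
  have hinj : Set.InjOn u T := fun t ht s hs hts => by
    by_contra hne
    exact (hu t ht t ht).1 (hts ▸ (hu s hs t ht).2 hne) rfl
  set W := T ∪ T.image u
  obtain ⟨v, hvW, hvdeg⟩ := hdeg W ((Finset.card_pos.1 (by omega)).mono Finset.subset_union_left)
  have hnbrs : ∃ S ⊆ W.filter (fun w => G.Adj v w), S.card = T.card - 1 := by
    rcases Finset.mem_union.1 hvW with hv | hv
    · refine ⟨(T.erase v).image u, fun x hx => ?_, ?_⟩
      · obtain ⟨t, ht, rfl⟩ := Finset.mem_image.1 hx
        obtain ⟨hne, ht⟩ := Finset.mem_erase.1 ht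
        exact Finset.mem_filter.2 ⟨Finset.mem_union_right _ (Finset.mem_image_of_mem u ht),
          ((hu t ht v hv).2 (Ne.symm hne)).symm⟩
      · rw [Finset.card_image_of_injOn (hinj.mono (Finset.erase_subset _ _)),
          Finset.card_erase_of_mem hv]
    · obtain ⟨t, ht, rfl⟩ := Finset.mem_image.1 hv
      refine ⟨T.erase t, fun s hs => ?_, Finset.card_erase_of_mem ht⟩
      obtain ⟨hne, hs⟩ := Finset.mem_erase.1 hs
      exact Finset.mem_filter.2 ⟨Finset.mem_union_left _ hs, (hu t ht s hs).2 hne⟩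
  obtain ⟨S, hS, hScard⟩ := hnbrs
  have := Finset.card_le_card hS
  omega

end SimpleGraph

theorem statement4_general {V : Type*} (G : SimpleGraph V) [DecidableRel G.Adj]
    (d : ℕ)
    (hdeg : ∀ W : Finset V, W.Nonempty →
      ∃ v ∈ W, (W.filter (fun w => G.Adj v w)).card ≤ d) :
    G.nawn ≤ d + 1 := by
  classical
  refine Nat.sInf_le ⟨d.succ_pos, fun T hT => ?_⟩
  obtain ⟨T', hsub, hT', hmin⟩ := hT.exists_minimal_subset
  obtain ⟨u, hu⟩ := hT'.exists_adj_iff_ne hmin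
  exact ⟨T', hsub, G.card_le_succ_of_adj_iff_ne hdeg hu, hT'⟩

theorem statement4 {V : Type*} (G : SimpleGraph V) [DecidableRel G.Adj]
    (d : ℕ) (hd : 0 < d)
    (hdeg : ∀ W : Finset V, W.Nonempty →
      ∃ v ∈ W, (W.filter (fun w => G.Adj v w)).card ≤ d) :
    G.nawn ≤ d + 1 :=
  statement4_general G d hdeg
end

section
/- Every planar graph G satisfies q(G) ≤ 4, where q(G) is the non-adjacency witness number. -/
/-- `H` is a minor of `G`: there are pairwise-disjoint nonempty connected branch sets
in `G`, one for each vertex of `H`, with edges between branch sets of adjacent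
vertices of `H`. -/
def IsMinor {V W : Type*} (H : SimpleGraph W) (G : SimpleGraph V) : Prop :=
  ∃ f : W → Set V,
    (∀ w, (f w).Nonempty) ∧
    (∀ w, (G.induce (f w)).Connected) ∧
    (∀ w w', w ≠ w' → Disjoint (f w) (f w')) ∧
    (∀ w w', H.Adj w w' → ∃ u ∈ f w, ∃ v ∈ f w', G.Adj u v)

/-- Planarity, via Wagner's theorem: a graph is planar iff it has neither a `K₅` minor
nor a `K_{3,3}` minor. -/
def IsPlanar {V : Type*} (G : SimpleGraph V) : Prop :=
  ¬ IsMinor (⊤ : SimpleGraph (Fin 5)) G ∧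
    ¬ IsMinor (completeBipartiteGraph (Fin 3) (Fin 3)) G

/-!
Pass to a minimal subset `S` of `T` without a common neighbour and suppose `|S| ≥ 5`. By
minimality each `S \ {s}` has a common neighbour `v s`, and these are pairwise distinct, since a
repeated one would be a common neighbour of all of `S`; `v s = s` is possible, and then `s` is
adjacent to the rest of `S`. Fix five elements `s i` of `S`, ordered so that the `k` indices with
`v i ≠ s i` come first. If `k ≤ 1`, the `s i` span a `K₅`. If `k = 2`, then `s 2, s 3, s 4` and
`s 0, s 1, v 0` span a `K₃,₃`. If `k ≥ 3`, then `{v 3}, {v 2}, {v 0, s 2, v 1}` against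
`{s 0}, {s 1}, {s 4}` are the branch sets of a `K₃,₃` minor.
-/

open Finset

lemma Fin.exists_perm_mem_iff_lt_card {n : ℕ} (N : Finset (Fin n)) :
    ∃ σ : Equiv.Perm (Fin n), ∀ i, σ i ∈ N ↔ (i : ℕ) < #N := by
  have hcard : Fintype.card {i : Fin n // (i : ℕ) < #N} = Fintype.card {i // i ∈ N} := by
    simpa [Fintype.card_subtype, Fin.card_filter_val_lt] using N.card_le_univ
  let e := Fintype.equivOfCardEq hcard
  refine ⟨e.extendSubtype, fun i => ⟨fun h => ?_, e.extendSubtype_mem i⟩⟩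
  by_contra hi
  exact e.extendSubtype_not_mem i hi h

namespace SimpleGraph

variable {V W ι ι' α β : Type*} {G : SimpleGraph V}

lemma isMinor_of_isContained {H : SimpleGraph W} (h : H ⊑ G) : IsMinor H G := by
  obtain ⟨f⟩ := h
  refine ⟨fun w => {f w}, fun w => Set.singleton_nonempty _, fun w => ?_,
    fun w w' hne => Set.disjoint_singleton.2 (f.injective.ne hne),
    fun w w' hadj => ⟨f w, rfl, f w', rfl, f.toHom.map_adj hadj⟩⟩
  rw [induce_singleton_eq_top]
  exact connected_top

lemma completeBipartiteGraph_isContained_of_adj [Fintype α] [Fintype β] {a : α → V} {b : β → V}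
    (ha : Function.Injective a) (hb : Function.Injective b) (hab : ∀ i j, G.Adj (a i) (b j)) :
    completeBipartiteGraph α β ⊑ G :=
  completeBipartiteGraph_isContained_iff.2 ⟨univ.map ⟨a, ha⟩, univ.map ⟨b, hb⟩, by simp, by simp,
    by simpa [IsCompleteBetween] using hab⟩

/-- Unlike in a crown graph (`K_{n,n}` minus a perfect matching), `v i = s i` is allowed. -/
structure IsCrown (G : SimpleGraph V) (s v : ι → V) : Prop where
  injective_left : Function.Injective s
  injective_right : Function.Injective v
  adj : ∀ ⦃i j⦄, i ≠ j → G.Adj (v i) (s j)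

lemma exists_isCrown_of_minimal {S : Finset V} (hS : Minimal G.NoCommonNbr S) :
    ∃ v : S → V, G.IsCrown (↑) v := by
  classical
  have hw (x : S) : ∃ w, ∀ t ∈ S.erase x, G.Adj w t := by
    by_contra hx
    exact S.notMem_erase (x : V) (hS.2 hx (S.erase_subset (x : V)) x.2)
  choose v hv using hw
  refine ⟨v, Subtype.val_injective, fun x y hxy => ?_,
    fun x y hxy => hv x y (mem_erase.2 ⟨Subtype.val_injective.ne hxy.symm, y.2⟩)⟩
  by_contra hne
  refine hS.prop ⟨v x, fun t ht => ?_⟩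
  by_cases htx : t = x
  · rw [htx, hxy]
    exact hv y x (mem_erase.2 ⟨Subtype.val_injective.ne hne, x.2⟩)
  · exact hv x t (mem_erase.2 ⟨htx, ht⟩)

namespace IsCrown

variable {s v : ι → V} {i j : ι}

lemma ne (h : G.IsCrown s v) (hij : i ≠ j) : v i ≠ s j := (h.adj hij).ne

lemma ne' (h : G.IsCrown s v) (hij : i ≠ j) : s j ≠ v i := (h.adj hij).ne'

lemma adj_symm (h : G.IsCrown s v) (hij : i ≠ j) : G.Adj (s j) (v i) := (h.adj hij).symm

lemma comp (h : G.IsCrown s v) (e : ι' ↪ ι) : G.IsCrown (s ∘ e) (v ∘ e) :=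
  ⟨h.injective_left.comp e.injective, h.injective_right.comp e.injective,
    fun _ _ hij => h.adj (e.injective.ne hij)⟩

lemma top_isContained (h : G.IsCrown s v) (hI : ∀ i j, i ≠ j → v i = s i ∨ v j = s j) :
    (⊤ : SimpleGraph ι) ⊑ G := by
  refine ⟨⟨⟨s, fun {i j} hij => ?_⟩, h.injective_left⟩⟩
  rcases hI i j hij with hi | hj
  · exact hi ▸ h.adj hij
  · exact hj ▸ h.adj_symm hij.symm

lemma completeBipartiteGraph_isContained {s v : Fin 5 → V} (h : G.IsCrown s v)
    (h0 : v 0 ≠ s 0) (h2 : v 2 = s 2) (h3 : v 3 = s 3) (h4 : v 4 = s 4) :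
    completeBipartiteGraph (Fin 3) (Fin 3) ⊑ G := by
  have hss : ∀ i, v i = s i → ∀ j, i ≠ j → G.Adj (s i) (s j) := fun i hi j hij => hi ▸ h.adj hij
  refine completeBipartiteGraph_isContained_of_adj (a := s ∘ ![2, 3, 4]) (b := ![s 0, s 1, v 0])
    (h.injective_left.comp (by decide)) ?_ ?_
  · intro i j
    fin_cases i <;> fin_cases j <;> simp [h.injective_left.eq_iff, h.ne, h.ne', h0, h0.symm]
  · intro i j
    fin_cases i <;> fin_cases j <;> simp [hss _ h2, hss _ h3, hss _ h4, h.adj_symm]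

lemma isMinor_completeBipartiteGraph {s v : Fin 5 → V} (h : G.IsCrown s v)
    (h0 : v 0 ≠ s 0) (h1 : v 1 ≠ s 1) (h2 : v 2 ≠ s 2) :
    IsMinor (completeBipartiteGraph (Fin 3) (Fin 3)) G := by
  refine ⟨Sum.elim ![{v 3}, {v 2}, {v 0, s 2} ∪ {s 2, v 1}] ![{s 0}, {s 1}, {s 4}],
    ?_, ?_, ?_, ?_⟩
  · rintro (i | i) <;> fin_cases i <;> simp
  · rintro (i | i) <;> fin_cases i <;> simp only [Fin.reduceFinMk, Sum.elim_inl, Sum.elim_inr,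
      Matrix.cons_val, induce_singleton_eq_top, connected_top]
    exact induce_union_connected (induce_pair_connected_of_adj (h.adj (by decide))).preconnected
      (induce_pair_connected_of_adj (h.adj_symm (by decide))).preconnected ⟨s 2, by simp⟩
  · rintro (i | i) (j | j) hij <;> fin_cases i <;> fin_cases j <;>
      simp [h.injective_left.eq_iff, h.injective_right.eq_iff, h.ne, h.ne', h2, h0.symm,
        h1.symm] at hij ⊢
  · rintro (i | i) (j | j) hij <;> fin_cases i <;> fin_cases j <;>
      simp [h.adj, h.adj_symm] at hij ⊢

lemma not_isPlanar {s v : Fin 5 → V} (h : G.IsCrown s v) : ¬ IsPlanar G := by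
  classical
  obtain ⟨σ, hσ⟩ := Fin.exists_perm_mem_iff_lt_card {i | v i ≠ s i}
  set k := #{i | v i ≠ s i}
  have hk (i : Fin 5) : v (σ i) = s (σ i) ↔ k ≤ i := by simpa using (hσ i).not
  replace h := h.comp σ.toEmbedding
  rintro ⟨hK5, hK33⟩
  obtain hk1 | hk2 | hk3 : k ≤ 1 ∨ k = 2 ∨ 3 ≤ k := by omega
  · refine hK5 (isMinor_of_isContained (h.top_isContained fun i j hij => ?_))
    simp only [Function.comp, Equiv.coe_toEmbedding, hk]
    omega
  · exact hK33 (isMinor_of_isContained (h.completeBipartiteGraph_isContained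
      ((hk 0).not.2 (by omega)) ((hk 2).2 (by omega)) ((hk 3).2 (by omega)) ((hk 4).2 (by omega))))
  · exact hK33 (h.isMinor_completeBipartiteGraph
      ((hk 0).not.2 (by omega)) ((hk 1).not.2 (by omega)) ((hk 2).not.2 (by omega)))

end IsCrown

lemma _root_.IsPlanar.card_le_four_of_minimal (hG : IsPlanar G) {S : Finset V}
    (hS : Minimal G.NoCommonNbr S) : #S ≤ 4 := by
  by_contra! hS5
  obtain ⟨v, hv⟩ := exists_isCrown_of_minimal hS
  obtain ⟨e⟩ := Function.Embedding.nonempty_of_card_le (α := Fin 5) (β := S)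
    (by rw [Fintype.card_fin, Fintype.card_coe]; exact hS5)
  exact (hv.comp e).not_isPlanar hG

end SimpleGraph

theorem statement7 {V : Type*} (G : SimpleGraph V) (hG : IsPlanar G) :
    G.nawn ≤ 4 := by
  refine Nat.sInf_le ⟨by norm_num, fun T hT => ?_⟩
  obtain ⟨S, hST, hS⟩ := exists_minimal_le_of_wellFoundedLT G.NoCommonNbr T hT
  exact ⟨S, hST, hG.card_le_four_of_minimal hS, hS.prop⟩
end

section
/- If a graph G has a faithful d-dimensional independent representation over a field 𝔽, then q(G) ≤ d, where q(G) is the non-adjacency witness number of G. -/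
/-- A `d`-dimensional independent representation of `G` over `𝔽`: each vertex gets a
vector not lying in the span of its neighbors' vectors. -/
def IsIndepRep {V : Type*} (G : SimpleGraph V) (𝔽 : Type*) [Field 𝔽] (d : ℕ)
    (x : V → Fin d → 𝔽) : Prop :=
  ∀ v : V, x v ∉ Submodule.span 𝔽 (x '' G.neighborSet v)

/-- A faithful `d`-dimensional independent representation of `G` over `𝔽`:
an independent representation in which `u` and `v` are adjacent if and only if
`x u` lies in the span of the vectors of the neighbors of `v`. -/
def IsFaithfulIndepRep {V : Type*} (G : SimpleGraph V) (𝔽 : Type*) [Field 𝔽] (d : ℕ)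
    (x : V → Fin d → 𝔽) : Prop :=
  IsIndepRep G 𝔽 d x ∧
    ∀ u v : V, G.Adj u v ↔ x u ∈ Submodule.span 𝔽 (x '' G.neighborSet v)

theorem Finset.exists_subset_card_le_finrank_image_subset_span {ι K M : Type*} [Field K]
    [AddCommGroup M] [Module K M] [FiniteDimensional K M] (x : ι → M) (T : Finset ι) :
    ∃ T' ⊆ T, T'.card ≤ Module.finrank K M ∧ x '' T ⊆ Submodule.span K (x '' T') := by
  obtain ⟨b, hbT, -, hspan, hindep⟩ :=
    exists_linearIndepOn_extension (linearIndepOn_empty K x) (Set.empty_subset (T : Set ι))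
  obtain ⟨T', rfl⟩ : ∃ T' : Finset ι, (T' : Set ι) = b :=
    ⟨(T.finite_toSet.subset hbT).toFinset, Set.Finite.coe_toFinset _⟩
  refine ⟨T', Finset.coe_subset.mp hbT, ?_, hspan⟩
  simpa using hindep.fintype_card_le_finrank

namespace IsFaithfulIndepRep

variable {V 𝔽 : Type*} [Field 𝔽] {G : SimpleGraph V} {d : ℕ} {x : V → Fin d → 𝔽}

/-- Faithfulness makes the neighbourhood of `v` the preimage under `x` of a subspace. -/
theorem adj_of_mem_span (hx : IsFaithfulIndepRep G 𝔽 d x) {v t : V} {T : Finset V}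
    (hT : ∀ u ∈ T, G.Adj v u) (ht : x t ∈ Submodule.span 𝔽 (x '' T)) : G.Adj v t := by
  have hle : Submodule.span 𝔽 (x '' T) ≤ Submodule.span 𝔽 (x '' G.neighborSet v) := by
    rw [Submodule.span_le]
    rintro _ ⟨u, hu, rfl⟩
    exact (hx.2 u v).mp (hT u hu).symm
  exact ((hx.2 t v).mpr (hle ht)).symm

theorem hasNAW (hx : IsFaithfulIndepRep G 𝔽 d x) (hd : 0 < d) : G.HasNAW d := by
  refine ⟨hd, fun T hT => ?_⟩
  obtain ⟨T', hT'T, hcard, hspan⟩ :=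
    Finset.exists_subset_card_le_finrank_image_subset_span (K := 𝔽) x T
  refine ⟨T', hT'T, by simpa using hcard, ?_⟩
  rintro ⟨v, hv⟩
  exact hT ⟨v, fun t ht => hx.adj_of_mem_span hv (hspan ⟨t, ht, rfl⟩)⟩

end IsFaithfulIndepRep

theorem statement10 {V : Type*} (G : SimpleGraph V) (𝔽 : Type*) [Field 𝔽]
    (d : ℕ) (hd : 0 < d) (x : V → Fin d → 𝔽)
    (hx : IsFaithfulIndepRep G 𝔽 d x) :
    G.nawn ≤ d :=
  Nat.sInf_le (hx.hasNAW hd)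
end

section
/- For all positive integers m and r with m ≥ 2r, for every vertex B of the Kneser graph K(m,r), and over any field 𝔽 admitting a matrix M ∈ 𝔽^{(r−1)×m} in which every r−1 columns are linearly independent: if for each vertex A a vector x_A ∈ 𝔽^m is chosen with M x_A = 0 and with support exactly A, then the subspace U_B = span({x_C : C disjoint from B, |C| = r}) has dimension at most m − 2r + 1, and for every vertex A non-adjacent to B (i.e., A ∩ B ≠ ∅) it holds that x_A ∉ U_B. -/
/-!
Every generator `x_C` of `U_B` lies in `ker M` and vanishes on `B`, so `U_B` sits inside the kernel
of `v ↦ (M v, v|_B) : 𝔽^m → 𝔽^(r-1) × 𝔽^B`. This map is onto: `B` has `m - r ≥ r - 1` outside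
points, and any `r - 1` columns of `M` there span `𝔽^(r-1)`, so `M v` can be adjusted freely
without touching `v|_B`. Hence the kernel has dimension `m - (r - 1) - r`. If `A` meets `B`,
then `x_A` does not vanish on `B`, so it is not even in that kernel.
-/

/-- Vertices of the Kneser graph `K(m,r)`: the `r`-element subsets of `{1,…,m}`. -/
abbrev KneserVertex (m r : ℕ) := {A : Finset (Fin m) // A.card = r}

namespace Matrix

variable {K ι κ : Type*} [Field K] [Fintype ι] (M : Matrix κ ι K)

theorem exists_mulVec_eq_of_span_col_eq_top [DecidableEq ι] {T : Finset ι}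
    (hT : Submodule.span K (Set.range fun i : T => M.col i) = ⊤) (y : κ → K) :
    ∃ u : ι → K, M *ᵥ u = y ∧ ∀ i ∉ T, u i = 0 := by
  obtain ⟨c, hc⟩ :=
    (Submodule.mem_span_range_iff_exists_fun K).mp (hT ▸ Submodule.mem_top (x := y))
  refine ⟨fun i => if h : i ∈ T then c ⟨i, h⟩ else 0, ?_, fun i hi => dif_neg hi⟩
  ext j
  rw [← hc, Finset.sum_apply, Finset.univ_eq_attach, Finset.sum_attach_eq_sum_dite]
  simp [mulVec, dotProduct, mul_comm]

def mulVecProdRestrict (s : Finset ι) : (ι → K) →ₗ[K] (κ → K) × (s → K) :=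
  M.mulVecLin.prod (LinearMap.funLeft K K (↑))

theorem mem_ker_mulVecProdRestrict {s : Finset ι} {v : ι → K} :
    v ∈ LinearMap.ker (M.mulVecProdRestrict s) ↔ M *ᵥ v = 0 ∧ ∀ i ∈ s, v i = 0 := by
  simp [mulVecProdRestrict, funext_iff, LinearMap.funLeft]

theorem mulVecProdRestrict_surjective [DecidableEq ι] {s T : Finset ι} (hTs : Disjoint T s)
    (hT : Submodule.span K (Set.range fun i : T => M.col i) = ⊤) :
    Function.Surjective (M.mulVecProdRestrict s) := by
  rintro ⟨y, f⟩
  obtain ⟨g, rfl⟩ := LinearMap.funLeft_surjective_of_injective K K _ Subtype.val_injective f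
  obtain ⟨u, hu, huT⟩ := M.exists_mulVec_eq_of_span_col_eq_top hT (y - M *ᵥ g)
  refine ⟨g + u, Prod.ext ?_ (funext fun i => ?_)⟩
  · simp [mulVecProdRestrict, mulVec_add, hu]
  · simp [mulVecProdRestrict, LinearMap.funLeft, huT i (Finset.disjoint_right.mp hTs i.2)]

theorem finrank_ker_mulVecProdRestrict [Fintype κ] [DecidableEq ι] {s T : Finset ι}
    (hTs : Disjoint T s)
    (hT : Submodule.span K (Set.range fun i : T => M.col i) = ⊤) :
    Module.finrank K (LinearMap.ker (M.mulVecProdRestrict s)) + Fintype.card κ + s.card =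
      Fintype.card ι := by
  have := LinearMap.finrank_range_add_finrank_ker (M.mulVecProdRestrict s)
  rw [LinearMap.range_eq_top.mpr (M.mulVecProdRestrict_surjective hTs hT), finrank_top,
    Module.finrank_prod, Module.finrank_fintype_fun_eq_card, Module.finrank_fintype_fun_eq_card,
    Fintype.card_coe, Module.finrank_fintype_fun_eq_card] at this
  omega

end Matrix

theorem statement19_general (m r : ℕ) (hm : 2 * r ≤ m)
    (𝔽 : Type*) [Field 𝔽]
    (M : Matrix (Fin (r - 1)) (Fin m) 𝔽)
    (hM : ∀ s : Finset (Fin m), s.card = r - 1 →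
      LinearIndependent 𝔽 (fun i : s => fun j : Fin (r - 1) => M j (i : Fin m)))
    (x : KneserVertex m r → Fin m → 𝔽)
    (hMx : ∀ A : KneserVertex m r, M.mulVec (x A) = 0)
    (hsupp : ∀ (A : KneserVertex m r) (i : Fin m), x A i ≠ 0 ↔ i ∈ A.1)
    (B : KneserVertex m r) :
    Module.finrank 𝔽
        ↥(Submodule.span 𝔽 (x '' {C : KneserVertex m r | Disjoint C.1 B.1}))
        ≤ m - 2 * r + 1 ∧
    ∀ A : KneserVertex m r, ¬ Disjoint A.1 B.1 →
      x A ∉ Submodule.span 𝔽 (x '' {C : KneserVertex m r | Disjoint C.1 B.1}) := by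
  have hU : Submodule.span 𝔽 (x '' {C : KneserVertex m r | Disjoint C.1 B.1}) ≤
      LinearMap.ker (M.mulVecProdRestrict B.1) := by
    refine Submodule.span_le.mpr ?_
    rintro _ ⟨C, hCB, rfl⟩
    refine M.mem_ker_mulVecProdRestrict.mpr ⟨hMx C, fun i hiB => ?_⟩
    exact not_not.mp fun h => Finset.disjoint_right.mp hCB hiB ((hsupp C i).mp h)
  refine ⟨?_, fun A hAB hA => ?_⟩
  · obtain ⟨T, hTB, hT⟩ : ∃ T ⊆ B.1ᶜ, T.card = r - 1 :=
      Finset.exists_subset_card_eq (by rw [Finset.card_compl, Fintype.card_fin, B.2]; omega)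
    have hspan : Submodule.span 𝔽 (Set.range fun i : T => M.col i) = ⊤ :=
      (hM T hT).span_eq_top_of_card_eq_finrank' (by simp [hT])
    have hdim := M.finrank_ker_mulVecProdRestrict (Finset.disjoint_of_subset_left hTB
      disjoint_compl_left) hspan
    simp only [Fintype.card_fin, B.2] at hdim
    have hUle := Submodule.finrank_mono hU
    omega
  · obtain ⟨i, hiA, hiB⟩ := Finset.not_disjoint_iff.mp hAB
    exact (hsupp A i).mpr hiA ((M.mem_ker_mulVecProdRestrict.mp (hU hA)).2 i hiB)

theorem statement19 (m r : ℕ) (hr : 0 < r) (hm : 2 * r ≤ m)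
    (𝔽 : Type*) [Field 𝔽]
    (M : Matrix (Fin (r - 1)) (Fin m) 𝔽)
    (hM : ∀ s : Finset (Fin m), s.card = r - 1 →
      LinearIndependent 𝔽 (fun i : s => fun j : Fin (r - 1) => M j (i : Fin m)))
    (x : KneserVertex m r → Fin m → 𝔽)
    (hMx : ∀ A : KneserVertex m r, M.mulVec (x A) = 0)
    (hsupp : ∀ (A : KneserVertex m r) (i : Fin m), x A i ≠ 0 ↔ i ∈ A.1)
    (B : KneserVertex m r) :
    Module.finrank 𝔽
        ↥(Submodule.span 𝔽 (x '' {C : KneserVertex m r | Disjoint C.1 B.1}))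
        ≤ m - 2 * r + 1 ∧
    ∀ A : KneserVertex m r, ¬ Disjoint A.1 B.1 →
      x A ∉ Submodule.span 𝔽 (x '' {C : KneserVertex m r | Disjoint C.1 B.1}) :=
  statement19_general m r hm 𝔽 M hM x hMx hsupp B
end
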